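/- arXiv:1805.02873 — 8 statements merged into one kernel-verified Lean document; each statement's English description precedes it below -/
import Mathlib

section
/- Every irreducible homogeneous polynomial invariant curve f of a homogeneous planar vector field F_n = X_h + μ D divides h, where h = (x Q_n − y P_n)/(n+1). -/
open MvPolynomial

/-!
Write `X_h(f) = ∂₀h ∂₁f − ∂₁h ∂₀f`. Since `D(f) = s f` by Euler's identity, invariance of `f` under
`X_h + μ D` says `f ∣ X_h(f)`. Combining Euler's identities for `h` and `f` gives
`(n+1) h ∂₀f = s f ∂₀h − y X_h(f)` and `(n+1) h ∂₁f = s f ∂₁h + x X_h(f)`, so the prime `f` divides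
`h ∂₀f` and `h ∂₁f`. If `f ∤ h`, then `f` divides both partials, hence `s f = x ∂₀f + y ∂₁f` is
`f` times a polynomial without constant term; so `s = 0` and `f` is a nonzero constant, a unit.
-/

namespace MvPolynomial

variable {R : Type*}

theorem IsHomogeneous.eq_zero_of_forall_dvd_pderiv {σ : Type*} [Fintype σ] [CommRing R]
    [IsDomain R] [CharZero R] {f : MvPolynomial σ R} {s : ℕ} (hf : f.IsHomogeneous s)
    (hf0 : f ≠ 0) (hdvd : ∀ i, f ∣ pderiv i f) : s = 0 := by
  choose a ha using hdvd
  have hs : (s : MvPolynomial σ R) = ∑ i, X i * a i := by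
    refine mul_left_cancel₀ hf0 ?_
    rw [mul_comm, ← nsmul_eq_mul, ← hf.sum_X_mul_pderiv, Finset.mul_sum]
    exact Finset.sum_congr rfl fun i _ => by rw [ha]; ring
  simpa using congrArg constantCoeff hs

theorem IsHomogeneous.isUnit_of_ne_zero {σ : Type*} [Field R] {f : MvPolynomial σ R}
    (hf : f.IsHomogeneous 0) (hf0 : f ≠ 0) : IsUnit f := by
  rw [isUnit_iff_totalDegree_of_isReduced, totalDegree_zero_iff_isHomogeneous]
  refine ⟨isUnit_iff_ne_zero.mpr fun hc => hf0 ?_, hf⟩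
  rw [totalDegree_eq_zero_iff_eq_C.mp ((totalDegree_zero_iff_isHomogeneous σ).mpr hf), hc,
    map_zero]

section Plane

variable [CommRing R]

/-- The Hamiltonian vector field `X_h = -∂₁h ∂₀ + ∂₀h ∂₁` applied to `f`. -/
noncomputable def hamiltonianDeriv (h f : MvPolynomial (Fin 2) R) : MvPolynomial (Fin 2) R :=
  pderiv 0 h * pderiv 1 f - pderiv 1 h * pderiv 0 f

theorem IsHomogeneous.sum_X_mul_pderiv_fin_two {s : ℕ} {f : MvPolynomial (Fin 2) R}
    (hf : f.IsHomogeneous s) :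
    X 0 * pderiv 0 f + X 1 * pderiv 1 f = (s : MvPolynomial (Fin 2) R) * f := by
  rw [← nsmul_eq_mul, ← hf.sum_X_mul_pderiv, Fin.sum_univ_two]

variable {m s : ℕ} {h f : MvPolynomial (Fin 2) R}

theorem IsHomogeneous.mul_pderiv_zero (hh : h.IsHomogeneous m) (hf : f.IsHomogeneous s) :
    (m : MvPolynomial (Fin 2) R) * h * pderiv 0 f =
      (s : MvPolynomial (Fin 2) R) * f * pderiv 0 h - X 1 * hamiltonianDeriv h f := by
  rw [hamiltonianDeriv]
  linear_combination
    pderiv 0 h * hf.sum_X_mul_pderiv_fin_two - pderiv 0 f * hh.sum_X_mul_pderiv_fin_two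

theorem IsHomogeneous.mul_pderiv_one (hh : h.IsHomogeneous m) (hf : f.IsHomogeneous s) :
    (m : MvPolynomial (Fin 2) R) * h * pderiv 1 f =
      (s : MvPolynomial (Fin 2) R) * f * pderiv 1 h + X 0 * hamiltonianDeriv h f := by
  rw [hamiltonianDeriv]
  linear_combination
    pderiv 1 h * hf.sum_X_mul_pderiv_fin_two - pderiv 1 f * hh.sum_X_mul_pderiv_fin_two

end Plane

theorem dvd_of_dvd_hamiltonianDeriv [Field R] [CharZero R] {m s : ℕ}
    {h f : MvPolynomial (Fin 2) R} (hh : h.IsHomogeneous m) (hm : m ≠ 0) (hfirr : Irreducible f)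
    (hf : f.IsHomogeneous s) (hinv : f ∣ hamiltonianDeriv h f) : f ∣ h := by
  have hprime : Prime f := hfirr.prime
  have hmunit : IsUnit (m : MvPolynomial (Fin 2) R) := by
    rw [← map_natCast C]
    exact (isUnit_iff_ne_zero.mpr (Nat.cast_ne_zero.mpr hm)).map C
  have hdvd_mul : ∀ i, f ∣ h * pderiv i f := by
    refine fun i => hmunit.dvd_mul_left.mp ?_
    rw [← mul_assoc]
    fin_cases i
    · rw [Fin.zero_eta, hh.mul_pderiv_zero hf]
      exact dvd_sub ((dvd_mul_left f _).mul_right _) (hinv.mul_left _)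
    · rw [Fin.mk_one, hh.mul_pderiv_one hf]
      exact dvd_add ((dvd_mul_left f _).mul_right _) (hinv.mul_left _)
  by_contra hfh
  have hs : s = 0 := hf.eq_zero_of_forall_dvd_pderiv hfirr.ne_zero
    fun i => (hprime.dvd_mul.mp (hdvd_mul i)).resolve_left hfh
  exact hfirr.not_isUnit ((hs ▸ hf).isUnit_of_ne_zero hfirr.ne_zero)

end MvPolynomial

/-- Every irreducible homogeneous polynomial invariant curve `f` of a
homogeneous planar vector field `F_n = X_h + μ D` of degree `n` divides `h`,
where `h = (xQ_n − yP_n)/(n+1)` is homogeneous of degree `n+1`. -/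
theorem stmt4 (n s : ℕ) (h μ f K : MvPolynomial (Fin 2) ℂ)
    (hh : h.IsHomogeneous (n + 1))
    (hfirr : Irreducible f) (hfhom : f.IsHomogeneous s)
    (hinv : (-pderiv 1 h + μ * X 0) * pderiv 0 f + (pderiv 0 h + μ * X 1) * pderiv 1 f = K * f) :
    f ∣ h := by
  refine dvd_of_dvd_hamiltonianDeriv hh n.succ_ne_zero hfirr hfhom ⟨K - s * μ, ?_⟩
  rw [hamiltonianDeriv]
  linear_combination hinv - μ * hfhom.sum_X_mul_pderiv_fin_two
end

section
/- Suppose the quadratic Lotka–Volterra vector field F₂(x,y) = (x(a₁x + a₂y), y(b₁x + b₂y)) with a₁b₂(a₂b₁ − a₁b₂) ≠ 0 satisfies a₁ = b₁. Then F₂ has no nonzero polynomial first integral. (Indeed any candidate first integral would be of the form x^{n₁} y^{n₂}, forcing n₁a₁ + n₂b₁ = 0 and n₁a₂ + n₂b₂ = 0, hence n₁ = n₂ = 0.) -/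
/-!
Since `b₁ = a₁`, the vector field is `a₁ x E + y L` with `E = x ∂ₓ + y ∂ᵧ` the Euler
operator and `L = a₂ x ∂ₓ + b₂ y ∂ᵧ`. Both act diagonally on monomials, so the coefficient
of `x^(m+1) yⁿ` in `F₂(I) = 0` reads
`a₁ (m + n) c_{m,n} + (a₂ (m + 1) + b₂ (n - 1)) c_{m+1,n-1} = 0`.
By induction on the `y`-degree `n`, every `c_{m,n}` with `m + n > 0` vanishes,
and `c_{0,0} = I(0,0) = 0`.
-/

open MvPolynomial

namespace MvPolynomial

variable {R σ : Type*} [CommSemiring R]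

theorem coeff_X_mul_pderiv (i : σ) (p : MvPolynomial σ R) (d : σ →₀ ℕ) :
    coeff d (X i * pderiv i p) = d i * coeff d p := by
  classical
  induction p using MvPolynomial.induction_on' with
  | add p q hp hq => simp only [map_add, mul_add, coeff_add, hp, hq]
  | monomial m r =>
    rw [X_mul_pderiv_monomial, coeff_smul, coeff_monomial]
    split_ifs with h <;> simp [h, nsmul_eq_mul]

theorem coeff_X_mul_eq_zero {j : σ} {s : MvPolynomial σ R} {m : σ →₀ ℕ}
    (h : ∀ e, e + Finsupp.single j 1 = m → coeff e s = 0) : coeff m (X j * s) = 0 := by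
  classical
  rw [coeff_X_mul']
  split_ifs with hj
  · exact h _ (Finsupp.sub_add_single_one_cancel (Finsupp.mem_support_iff.1 hj))
  · rfl

end MvPolynomial

theorem eq_zero_of_lotkaVolterra_deriv_eq_zero {R : Type*} [CommRing R] [IsDomain R]
    [CharZero R] {a b c : R} (ha : a ≠ 0) {p : MvPolynomial (Fin 2) R}
    (h0 : constantCoeff p = 0)
    (h : X 0 * (C a * X 0 + C b * X 1) * pderiv 0 p + X 1 * (C a * X 0 + C c * X 1) * pderiv 1 p
      = 0) :
    p = 0 := by
  have hsplit : C a * (X 0 * (X 0 * pderiv 0 p + X 1 * pderiv 1 p)) +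
      X 1 * (C b * (X 0 * pderiv 0 p) + C c * (X 1 * pderiv 1 p)) = 0 := by
    rw [← h]; ring
  ext d
  rw [coeff_zero]
  induction hk : d 1 using Nat.strong_induction_on generalizing d with
  | _ k ih =>
  have htail : coeff (Finsupp.single 0 1 + d)
      (X 1 * (C b * (X 0 * pderiv 0 p) + C c * (X 1 * pderiv 1 p))) = 0 := by
    refine coeff_X_mul_eq_zero fun e he => ?_
    have : e 1 + 1 = k := by simpa [← hk] using congrArg (· 1) he
    simp [coeff_C_mul, coeff_X_mul_pderiv, ih (e 1) (by omega) e rfl]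
  have hcoeff := congrArg (coeff (Finsupp.single 0 1 + d)) hsplit
  rw [coeff_add, htail, add_zero, coeff_C_mul, coeff_X_mul, coeff_add, coeff_X_mul_pderiv,
    coeff_X_mul_pderiv, coeff_zero] at hcoeff
  have hdeg : a * ((d 0 + d 1 : ℕ) : R) * coeff d p = 0 := by
    push_cast; linear_combination hcoeff
  rcases mul_eq_zero.1 hdeg with hdeg | hdeg
  · have hsum : d 0 + d 1 = 0 := by exact_mod_cast (mul_eq_zero.1 hdeg).resolve_left ha
    have hd : d = 0 := by
      ext i
      fin_cases i <;>
        simp only [Fin.zero_eta, Fin.mk_one, Finsupp.coe_zero, Pi.zero_apply] <;> omega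
    rw [hd]; exact h0
  · exact hdeg

theorem stmt6_general (a₁ a₂ b₁ b₂ : ℂ) (ha₁ : a₁ ≠ 0)
    (hab : a₁ = b₁) :
    ∀ I : MvPolynomial (Fin 2) ℂ, constantCoeff I = 0 →
      (X 0 * (C a₁ * X 0 + C a₂ * X 1)) * pderiv 0 I +
      (X 1 * (C b₁ * X 0 + C b₂ * X 1)) * pderiv 1 I = 0 →
      I = 0 := by
  subst hab
  exact fun I h0 h => eq_zero_of_lotkaVolterra_deriv_eq_zero ha₁ h0 h

/-- If `F₂(x,y) = (x(a₁x+a₂y), y(b₁x+b₂y))` with `a₁ ≠ 0`, `b₂ ≠ 0`,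
`a₂b₁ − a₁b₂ ≠ 0` and `a₁ = b₁`, then `F₂` has no nonzero polynomial first
integral vanishing at the origin. -/
theorem stmt6 (a₁ a₂ b₁ b₂ : ℂ) (ha₁ : a₁ ≠ 0) (hb₂ : b₂ ≠ 0)
    (hdet : a₂ * b₁ - a₁ * b₂ ≠ 0) (hab : a₁ = b₁) :
    ∀ I : MvPolynomial (Fin 2) ℂ, constantCoeff I = 0 →
      (X 0 * (C a₁ * X 0 + C a₂ * X 1)) * pderiv 0 I +
      (X 1 * (C b₁ * X 0 + C b₂ * X 1)) * pderiv 1 I = 0 →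
      I = 0 :=
  stmt6_general a₁ a₂ b₁ b₂ ha₁ hab
end

section
/- Let F₂(x,y) = (x(a₁x + a₂y), y(b₁x + b₂y)) with a₁, b₂, a₂b₁−a₁b₂, b₁−a₁, b₂−a₂ all nonzero, and suppose I = x^{ps} y^{qs} ((b₁−a₁)x + (b₂−a₂)y)^{rs} is a first integral of F₂ for natural numbers p,q,r,s ≥ 1. Then (p+r)a₁ + q b₁ = 0 and (q+r)b₂ + p a₂ = 0, i.e. a₂ = −b₂(q+r)/p and b₁ = −a₁(p+r)/q. -/
/-!
The vector field acts on `ℂ[x, y]` as a derivation `D`, and `x`, `y` and the line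
`L = (b₁ - a₁)x + (b₂ - a₂)y` are Darboux polynomials of it, with cofactors `a₁x + a₂y`,
`b₁x + b₂y` and `a₁x + b₂y`. Cofactors add under products, so
`D I = s · I · (((p + r)a₁ + q b₁) x + ((q + r)b₂ + p a₂) y)`; as `I ≠ 0` (because `L ≠ 0`)
and `s ≠ 0`, both coefficients vanish.
-/

open MvPolynomial

namespace Derivation

variable {R A : Type*} [CommSemiring R] [CommSemiring A] [Algebra R A] (D : Derivation R A A)

theorem apply_mul_of_eq_mul {f g k l : A} (hf : D f = f * k) (hg : D g = g * l) :
    D (f * g) = f * g * (k + l) := by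
  rw [leibniz, hf, hg, smul_eq_mul, smul_eq_mul]
  ring

theorem apply_pow_of_eq_mul {f k : A} (hf : D f = f * k) (n : ℕ) :
    D (f ^ n) = f ^ n * (n * k) := by
  induction n with
  | zero => simp
  | succ n ih =>
    rw [pow_succ, apply_mul_of_eq_mul D ih hf]
    push_cast
    ring

end Derivation

section QuadraticVectorField

variable {R : Type*} [CommRing R]

theorem MvPolynomial.C_mul_X_add_C_mul_X_eq_zero_iff {α β : R} :
    (C α * X 0 + C β * X 1 : MvPolynomial (Fin 2) R) = 0 ↔ α = 0 ∧ β = 0 := by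
  refine ⟨fun h => ⟨?_, ?_⟩, fun ⟨hα, hβ⟩ => by simp [hα, hβ]⟩
  · simpa [coeff_X, Finsupp.single_eq_single_iff] using congrArg (coeff (Finsupp.single 0 1)) h
  · simpa [coeff_X, Finsupp.single_eq_single_iff] using congrArg (coeff (Finsupp.single 1 1)) h

noncomputable def quadraticVectorField (a₁ a₂ b₁ b₂ : R) :
    Derivation R (MvPolynomial (Fin 2) R) (MvPolynomial (Fin 2) R) :=
  (X 0 * (C a₁ * X 0 + C a₂ * X 1) : MvPolynomial (Fin 2) R) • pderiv 0 +
    (X 1 * (C b₁ * X 0 + C b₂ * X 1) : MvPolynomial (Fin 2) R) • pderiv 1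

variable (a₁ a₂ b₁ b₂ : R)

theorem quadraticVectorField_apply (f : MvPolynomial (Fin 2) R) :
    quadraticVectorField a₁ a₂ b₁ b₂ f =
      X 0 * (C a₁ * X 0 + C a₂ * X 1) * pderiv 0 f + X 1 * (C b₁ * X 0 + C b₂ * X 1) * pderiv 1 f := by
  simp [quadraticVectorField]

theorem quadraticVectorField_X_zero :
    quadraticVectorField a₁ a₂ b₁ b₂ (X 0) = X 0 * (C a₁ * X 0 + C a₂ * X 1) := by
  simp [quadraticVectorField_apply]

theorem quadraticVectorField_X_one :
    quadraticVectorField a₁ a₂ b₁ b₂ (X 1) = X 1 * (C b₁ * X 0 + C b₂ * X 1) := by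
  simp [quadraticVectorField_apply]

theorem quadraticVectorField_invariantLine :
    quadraticVectorField a₁ a₂ b₁ b₂ (C (b₁ - a₁) * X 0 + C (b₂ - a₂) * X 1) =
      (C (b₁ - a₁) * X 0 + C (b₂ - a₂) * X 1) * (C a₁ * X 0 + C b₂ * X 1) := by
  simp only [quadraticVectorField_apply, map_add, pderiv_C_mul, pderiv_X_self,
    pderiv_X_of_ne (show (0 : Fin 2) ≠ 1 by decide), pderiv_X_of_ne (show (1 : Fin 2) ≠ 0 by decide)]
  simp only [C_sub]
  ring

theorem quadraticVectorField_monomial_mul_invariantLine_pow (n m k : ℕ) :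
    quadraticVectorField a₁ a₂ b₁ b₂
        (X 0 ^ n * X 1 ^ m * (C (b₁ - a₁) * X 0 + C (b₂ - a₂) * X 1) ^ k) =
      X 0 ^ n * X 1 ^ m * (C (b₁ - a₁) * X 0 + C (b₂ - a₂) * X 1) ^ k *
        (C ((n + k) * a₁ + m * b₁) * X 0 + C (n * a₂ + (m + k) * b₂) * X 1) := by
  set D := quadraticVectorField a₁ a₂ b₁ b₂
  rw [D.apply_mul_of_eq_mul (D.apply_mul_of_eq_mul
      (D.apply_pow_of_eq_mul (quadraticVectorField_X_zero ..) n)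
      (D.apply_pow_of_eq_mul (quadraticVectorField_X_one ..) m))
    (D.apply_pow_of_eq_mul (quadraticVectorField_invariantLine ..) k)]
  simp only [← map_natCast (C : R →+* MvPolynomial (Fin 2) R), C_add, C_mul]
  ring

end QuadraticVectorField

theorem stmt7_general (a₁ a₂ b₁ b₂ : ℂ) (p q r s : ℕ)
    (h1 : b₁ - a₁ ≠ 0)
    (hs : 1 ≤ s)
    (hint :
      (X 0 * (C a₁ * X 0 + C a₂ * X 1)) *
          pderiv 0 (X 0 ^ (p * s) * X 1 ^ (q * s) * (C (b₁ - a₁) * X 0 + C (b₂ - a₂) * X 1) ^ (r * s)) +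
      (X 1 * (C b₁ * X 0 + C b₂ * X 1)) *
          pderiv 1 (X 0 ^ (p * s) * X 1 ^ (q * s) * (C (b₁ - a₁) * X 0 + C (b₂ - a₂) * X 1) ^ (r * s))
        = (0 : MvPolynomial (Fin 2) ℂ)) :
    ((p : ℂ) + r) * a₁ + q * b₁ = 0 ∧ ((q : ℂ) + r) * b₂ + p * a₂ = 0 := by
  rw [← quadraticVectorField_apply, quadraticVectorField_monomial_mul_invariantLine_pow] at hint
  have hL : (C (b₁ - a₁) * X 0 + C (b₂ - a₂) * X 1 : MvPolynomial (Fin 2) ℂ) ≠ 0 :=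
    fun h => h1 (C_mul_X_add_C_mul_X_eq_zero_iff.1 h).1
  have hI : (X 0 ^ (p * s) * X 1 ^ (q * s) * (C (b₁ - a₁) * X 0 + C (b₂ - a₂) * X 1) ^ (r * s) :
      MvPolynomial (Fin 2) ℂ) ≠ 0 :=
    mul_ne_zero (mul_ne_zero (pow_ne_zero _ (X_ne_zero 0)) (pow_ne_zero _ (X_ne_zero 1)))
      (pow_ne_zero _ hL)
  obtain ⟨hx, hy⟩ := C_mul_X_add_C_mul_X_eq_zero_iff.1 ((mul_eq_zero.1 hint).resolve_left hI)
  have hs₀ : (s : ℂ) ≠ 0 := by exact_mod_cast (by omega : s ≠ 0)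
  push_cast at hx hy
  exact ⟨mul_left_cancel₀ hs₀ (by linear_combination hx), mul_left_cancel₀ hs₀ (by linear_combination hy)⟩

/-- If `I = x^{ps} y^{qs} ((b₁−a₁)x + (b₂−a₂)y)^{rs}` is a first integral of
`F₂ = (x(a₁x+a₂y), y(b₁x+b₂y))` (with `a₁, b₂, a₂b₁−a₁b₂, b₁−a₁, b₂−a₂` all
nonzero and `p,q,r,s ≥ 1`), then `(p+r)a₁ + q b₁ = 0` and
`(q+r)b₂ + p a₂ = 0`. -/
theorem stmt7 (a₁ a₂ b₁ b₂ : ℂ) (p q r s : ℕ)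
    (ha₁ : a₁ ≠ 0) (hb₂ : b₂ ≠ 0) (hdet : a₂ * b₁ - a₁ * b₂ ≠ 0)
    (h1 : b₁ - a₁ ≠ 0) (h2 : b₂ - a₂ ≠ 0)
    (hp : 1 ≤ p) (hq : 1 ≤ q) (hr : 1 ≤ r) (hs : 1 ≤ s)
    (hint :
      (X 0 * (C a₁ * X 0 + C a₂ * X 1)) *
          pderiv 0 (X 0 ^ (p * s) * X 1 ^ (q * s) * (C (b₁ - a₁) * X 0 + C (b₂ - a₂) * X 1) ^ (r * s)) +
      (X 1 * (C b₁ * X 0 + C b₂ * X 1)) *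
          pderiv 1 (X 0 ^ (p * s) * X 1 ^ (q * s) * (C (b₁ - a₁) * X 0 + C (b₂ - a₂) * X 1) ^ (r * s))
        = (0 : MvPolynomial (Fin 2) ℂ)) :
    ((p : ℂ) + r) * a₁ + q * b₁ = 0 ∧ ((q : ℂ) + r) * b₂ + p * a₂ = 0 :=
  stmt7_general a₁ a₂ b₁ b₂ p q r s h1 hs hint
end

section
/- For F₂ = (x(-qx+(q+r)y), y((p+r)x-py)) with p,q,r positive integers and any k ∈ ℕ, the operator ℓ_{k+3}^c : span{x^{k+2}, x^{k+1}y, y^{k+2}} → span{x^{k+3}, x^{k+2}y, y^{k+3}} defined by projecting (F₂ − (3/(k+3))μD)(g) modulo h·(homogeneous polynomials of degree k) has determinant ((k+2)³/(k+3)³)(q+qk+p+r)(q+p+rk+r)(p+pk+q+r) ≠ 0, hence is bijective. -/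
/-!
After absorbing the Euler term, `F₂ − (3/(k+3))μD` is a Lotka–Volterra field
`x·L₀(x,y) ∂ₓ + y·L₁(x,y) ∂ᵧ` with linear forms `L₀, L₁`, and such a field acts on monomials by
`xᵃyᵇ ↦ (a L₀ + b L₁) xᵃyᵇ`. Modulo `xy(x−y)·𝒫_k` both `x^{k+1}y²` and `xy^{k+2}` reduce to
`x^{k+2}y`. Hence the `x^{k+3}`- and `y^{k+3}`-coordinates of the image only see the
`x^{k+2}`- and `y^{k+2}`-coordinates respectively, and the determinant of `ℓ_{k+3}^c` is the
product of the three diagonal entries.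
-/

open MvPolynomial Matrix Finset

noncomputable section

variable {R : Type*} [CommRing R]

def linearForm (L : Matrix (Fin 2) (Fin 2) R) (i : Fin 2) : MvPolynomial (Fin 2) R :=
  C (L i 0) * X 0 + C (L i 1) * X 1

def lotkaVolterraField (L : Matrix (Fin 2) (Fin 2) R) :
    Derivation R (MvPolynomial (Fin 2) R) (MvPolynomial (Fin 2) R) :=
  (X 0 * linearForm L 0) • pderiv 0 + (X 1 * linearForm L 1) • pderiv 1

lemma lotkaVolterraField_apply (L : Matrix (Fin 2) (Fin 2) R) (g : MvPolynomial (Fin 2) R) :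
    lotkaVolterraField L g =
      X 0 * linearForm L 0 * pderiv 0 g + X 1 * linearForm L 1 * pderiv 1 g :=
  rfl

lemma lotkaVolterraField_X_pow_mul_X_pow (L : Matrix (Fin 2) (Fin 2) R) (a b : ℕ) :
    lotkaVolterraField L (X 0 ^ a * X 1 ^ b) =
      ((a : MvPolynomial (Fin 2) R) * linearForm L 0 +
        (b : MvPolynomial (Fin 2) R) * linearForm L 1) * (X 0 ^ a * X 1 ^ b) := by
  have hmon : (X 0 ^ a * X 1 ^ b : MvPolynomial (Fin 2) R) =
      monomial (Finsupp.single 0 a + Finsupp.single 1 b) 1 := by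
    simp [X_pow_eq_monomial, monomial_mul]
  rw [lotkaVolterraField_apply, mul_comm (X 0), mul_comm (X 1), mul_assoc, mul_assoc, hmon,
    X_mul_pderiv_monomial, X_mul_pderiv_monomial]
  simp only [Finsupp.coe_add, Pi.add_apply, Finsupp.single_eq_same, ne_eq, zero_ne_one,
    one_ne_zero, not_false_eq_true, Finsupp.single_eq_of_ne, add_zero, zero_add, nsmul_eq_mul]
  ring

def cubicMultiples (k : ℕ) : Submodule R (MvPolynomial (Fin 2) R) :=
  (homogeneousSubmodule (Fin 2) R k).map (LinearMap.mulLeft R (X 0 * X 1 * (X 0 - X 1)))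

lemma mem_cubicMultiples {k : ℕ} {f : MvPolynomial (Fin 2) R} :
    f ∈ cubicMultiples k ↔ ∃ w : MvPolynomial (Fin 2) R, w.IsHomogeneous k ∧
      X 0 * X 1 * (X 0 - X 1) * w = f := by
  simp [cubicMultiples, mem_homogeneousSubmodule, mul_assoc]

lemma X_pow_mul_X_sq_sub_mem_cubicMultiples (k : ℕ) :
    (X 0 ^ (k + 1) * X 1 ^ 2 - X 0 ^ (k + 2) * X 1 : MvPolynomial (Fin 2) R) ∈
      cubicMultiples k :=
  mem_cubicMultiples.2 ⟨-X 0 ^ k, (isHomogeneous_X_pow 0 k).neg, by ring⟩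

lemma X_mul_X_pow_sub_mem_cubicMultiples (k : ℕ) :
    (X 0 * X 1 ^ (k + 2) - X 0 ^ (k + 2) * X 1 : MvPolynomial (Fin 2) R) ∈
      cubicMultiples k := by
  refine mem_cubicMultiples.2 ⟨-∑ i ∈ range (k + 1), X 0 ^ i * X 1 ^ (k - i),
    (IsHomogeneous.sum _ _ _ fun i hi => ?_).neg, ?_⟩
  · have := (isHomogeneous_X_pow (σ := Fin 2) (R := R) 0 i).mul (isHomogeneous_X_pow 1 (k - i))
    rwa [Nat.add_sub_cancel' (Nat.lt_succ_iff.1 (mem_range.1 hi))] at this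
  · have hgeom := geom_sum₂_mul (X 0 : MvPolynomial (Fin 2) R) (X 1) (k + 1)
    simp only [Nat.add_sub_cancel] at hgeom
    linear_combination (-(X 0 * X 1) : MvPolynomial (Fin 2) R) * hgeom

/-- The element of `Δ_{n+1}` with coordinates `v`. -/
def deltaComb (n : ℕ) (v : Fin 3 → R) : MvPolynomial (Fin 2) R :=
  C (v 0) * X 0 ^ (n + 1) + C (v 1) * X 0 ^ n * X 1 + C (v 2) * X 1 ^ (n + 1)

def reducedMatrix (L : Matrix (Fin 2) (Fin 2) R) (k : ℕ) : Matrix (Fin 3) (Fin 3) R :=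
  !![(k + 2) * L 0 0, 0, 0;
     (k + 2) * L 0 1, (k + 1) * (L 0 0 + L 0 1) + L 1 0 + L 1 1, (k + 2) * L 1 0;
     0, 0, (k + 2) * L 1 1]

lemma det_reducedMatrix (L : Matrix (Fin 2) (Fin 2) R) (k : ℕ) :
    (reducedMatrix L k).det =
      (k + 2) ^ 2 * L 0 0 * L 1 1 * ((k + 1) * (L 0 0 + L 0 1) + L 1 0 + L 1 1) := by
  simp only [reducedMatrix, det_fin_three, of_apply, cons_val', cons_val_zero, cons_val_one,
    Matrix.cons_val, cons_val_fin_one, mul_zero, zero_mul, sub_zero, add_zero]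
  ring

lemma reducedMatrix_mulVec (L : Matrix (Fin 2) (Fin 2) R) (k : ℕ) (v : Fin 3 → R) :
    reducedMatrix L k *ᵥ v = ![(k + 2) * L 0 0 * v 0,
      (k + 2) * L 0 1 * v 0 + ((k + 1) * (L 0 0 + L 0 1) + L 1 0 + L 1 1) * v 1 +
        (k + 2) * L 1 0 * v 2,
      (k + 2) * L 1 1 * v 2] := by
  ext i
  fin_cases i <;> simp [reducedMatrix, mulVec, dotProduct, Fin.sum_univ_three]

lemma lotkaVolterraField_deltaComb_sub_mem_cubicMultiples (L : Matrix (Fin 2) (Fin 2) R)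
    (k : ℕ) (v : Fin 3 → R) :
    lotkaVolterraField L (deltaComb (k + 1) v) - deltaComb (k + 2) (reducedMatrix L k *ᵥ v) ∈
      cubicMultiples k := by
  set D := lotkaVolterraField L
  have hcomb : deltaComb (k + 1) v = v 0 • (X 0 ^ (k + 2) * X 1 ^ 0) +
      v 1 • (X 0 ^ (k + 1) * X 1 ^ 1) + v 2 • (X 0 ^ 0 * X 1 ^ (k + 2)) := by
    simp only [deltaComb, ← C_mul', pow_zero, pow_one, mul_one, one_mul]
    ring
  have hreduce : D (deltaComb (k + 1) v) - deltaComb (k + 2) (reducedMatrix L k *ᵥ v) =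
      (v 1 * ((k + 1) * L 0 1 + L 1 1)) • (X 0 ^ (k + 1) * X 1 ^ 2 - X 0 ^ (k + 2) * X 1) +
      (v 2 * ((k + 2) * L 1 0)) • (X 0 * X 1 ^ (k + 2) - X 0 ^ (k + 2) * X 1) := by
    rw [hcomb, map_add, map_add, D.map_smul, D.map_smul, D.map_smul,
      lotkaVolterraField_X_pow_mul_X_pow, lotkaVolterraField_X_pow_mul_X_pow,
      lotkaVolterraField_X_pow_mul_X_pow]
    simp only [deltaComb, linearForm, reducedMatrix_mulVec, smul_eq_C_mul, cons_val_zero,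
      cons_val_one, Matrix.cons_val, map_add, map_mul, map_natCast, map_ofNat, map_one,
      Nat.cast_add, Nat.cast_ofNat, Nat.cast_one, Nat.cast_zero, pow_zero, pow_one]
    ring
  rw [hreduce]
  exact add_mem (Submodule.smul_mem _ _ (X_pow_mul_X_sq_sub_mem_cubicMultiples k))
    (Submodule.smul_mem _ _ (X_mul_X_pow_sub_mem_cubicMultiples k))

/-- The rows of `ellCoeffs` are `L₀, L₁` in `F₂ − (3/(k+3))μD = x L₀ ∂ₓ + y L₁ ∂ᵧ`, read off from
`P = x(−qx + (q+r)y)`, `Q = y((p+r)x − py)` and `3μ = (−2q+p+r)x + (q+r−2p)y`. -/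
def ellCoeffs (p q r k : ℕ) : Matrix (Fin 2) (Fin 2) ℂ :=
  !![-q - (-2 * q + p + r) / (k + 3), q + r - (q + r - 2 * p) / (k + 3);
     p + r - (-2 * q + p + r) / (k + 3), -p - (q + r - 2 * p) / (k + 3)]

lemma lotkaVolterraField_ellCoeffs (p q r k : ℕ) (g : MvPolynomial (Fin 2) ℂ) :
    ((X 0 : MvPolynomial (Fin 2) ℂ) *
          (-(q : MvPolynomial (Fin 2) ℂ) * X 0 + (q + r : MvPolynomial (Fin 2) ℂ) * X 1) *
        pderiv 0 g +
      (X 1 : MvPolynomial (Fin 2) ℂ) *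
          ((p + r : MvPolynomial (Fin 2) ℂ) * X 0 - (p : MvPolynomial (Fin 2) ℂ) * X 1) *
        pderiv 1 g -
      C (3 / ((k : ℂ) + 3)) * (C ((1 : ℂ) / 3) *
        (C ((-2 : ℂ) * q + p + r) * X 0 + C ((q : ℂ) + r - 2 * p) * X 1)) *
        (X 0 * pderiv 0 g + X 1 * pderiv 1 g) : MvPolynomial (Fin 2) ℂ) =
    lotkaVolterraField (ellCoeffs p q r k) g := by
  have hk : (k : ℂ) + 3 ≠ 0 := by exact_mod_cast (by omega : k + 3 ≠ 0)
  have hscale : C (3 / ((k : ℂ) + 3)) * C ((1 : ℂ) / 3) =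
      (C ((k : ℂ) + 3)⁻¹ : MvPolynomial (Fin 2) ℂ) := by
    rw [← C_mul]
    congr 1
    field_simp
  rw [← mul_assoc (C _), hscale]
  simp only [lotkaVolterraField_apply, linearForm, ellCoeffs, of_apply, cons_val', cons_val_zero,
    cons_val_one, empty_val', cons_val_fin_one, div_eq_mul_inv, map_sub, map_add, map_mul,
    map_neg, map_natCast, map_ofNat]
  ring

lemma det_reducedMatrix_ellCoeffs (p q r k : ℕ) :
    (reducedMatrix (ellCoeffs p q r k) k).det = (((k : ℂ) + 2) ^ 3 / ((k : ℂ) + 3) ^ 3) *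
      ((q : ℂ) + q * k + p + r) * ((q : ℂ) + p + r * k + r) * ((p : ℂ) + p * k + q + r) := by
  have hk : (k : ℂ) + 3 ≠ 0 := by exact_mod_cast (by omega : k + 3 ≠ 0)
  rw [det_reducedMatrix]
  simp only [ellCoeffs, of_apply, cons_val', cons_val_zero, cons_val_one, empty_val',
    cons_val_fin_one]
  field_simp
  ring

lemma det_reducedMatrix_ellCoeffs_ne_zero {p q r : ℕ} (k : ℕ) (hq : 1 ≤ q) :
    (reducedMatrix (ellCoeffs p q r k) k).det ≠ 0 := by
  have hk : (k : ℂ) + 3 ≠ 0 := by exact_mod_cast (by omega : k + 3 ≠ 0)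
  have hk' : (k : ℂ) + 2 ≠ 0 := by exact_mod_cast (by omega : k + 2 ≠ 0)
  have h₁ : (q : ℂ) + q * k + p + r ≠ 0 := by exact_mod_cast (by omega : q + q * k + p + r ≠ 0)
  have h₂ : (q : ℂ) + p + r * k + r ≠ 0 := by exact_mod_cast (by omega : q + p + r * k + r ≠ 0)
  have h₃ : (p : ℂ) + p * k + q + r ≠ 0 := by exact_mod_cast (by omega : p + p * k + q + r ≠ 0)
  rw [det_reducedMatrix_ellCoeffs]
  simp [hk, hk', h₁, h₂, h₃]

end

theorem stmt8_general (p q r k : ℕ) (hq : 1 ≤ q) :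
    let x : MvPolynomial (Fin 2) ℂ := X 0
    let y : MvPolynomial (Fin 2) ℂ := X 1
    let P : MvPolynomial (Fin 2) ℂ := x * (-(q : MvPolynomial (Fin 2) ℂ) * x + ((q : MvPolynomial (Fin 2) ℂ) + r) * y)
    let Q : MvPolynomial (Fin 2) ℂ := y * (((p : MvPolynomial (Fin 2) ℂ) + r) * x - (p : MvPolynomial (Fin 2) ℂ) * y)
    let μ : MvPolynomial (Fin 2) ℂ := C ((1 : ℂ) / 3) * ((C ((-2 : ℂ) * q + p + r)) * x + (C ((q : ℂ) + r - 2 * p)) * y)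
    let h : MvPolynomial (Fin 2) ℂ := C (((p : ℂ) + q + r) / 3) * (x * y * (x - y))
    let G : MvPolynomial (Fin 2) ℂ → MvPolynomial (Fin 2) ℂ := fun g =>
      P * pderiv 0 g + Q * pderiv 1 g -
        C (3 / ((k : ℂ) + 3)) * μ * (x * pderiv 0 g + y * pderiv 1 g)
    ∃ M : Matrix (Fin 3) (Fin 3) ℂ,
      (∀ v : Fin 3 → ℂ, ∃ w : MvPolynomial (Fin 2) ℂ, w.IsHomogeneous k ∧
        G (C (v 0) * x ^ (k + 2) + C (v 1) * x ^ (k + 1) * y + C (v 2) * y ^ (k + 2)) =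
          C (M.mulVec v 0) * x ^ (k + 3) + C (M.mulVec v 1) * x ^ (k + 2) * y +
            C (M.mulVec v 2) * y ^ (k + 3) + h * w) ∧
      M.det = (((k : ℂ) + 2) ^ 3 / ((k : ℂ) + 3) ^ 3) *
        ((q : ℂ) + q * k + p + r) * ((q : ℂ) + p + r * k + r) * ((p : ℂ) + p * k + q + r) ∧
      M.det ≠ 0 := by
  intro x y P Q μ h G
  refine ⟨reducedMatrix (ellCoeffs p q r k) k, fun v => ?_, det_reducedMatrix_ellCoeffs p q r k,
    det_reducedMatrix_ellCoeffs_ne_zero k hq⟩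
  obtain ⟨w, hw, hw_eq⟩ := mem_cubicMultiples.1
    (lotkaVolterraField_deltaComb_sub_mem_cubicMultiples (ellCoeffs p q r k) k v)
  have hσ : ((p : ℂ) + q + r) / 3 ≠ 0 := by
    have : (p : ℂ) + q + r ≠ 0 := by exact_mod_cast (by omega : p + q + r ≠ 0)
    simpa using this
  have hh : h * C (((p : ℂ) + q + r) / 3)⁻¹ = X 0 * X 1 * (X 0 - X 1) := by
    rw [mul_right_comm, ← C_mul, mul_inv_cancel₀ hσ, C_1, one_mul]
  refine ⟨C (((p : ℂ) + q + r) / 3)⁻¹ * w, by simpa using (isHomogeneous_C _ _).mul hw, ?_⟩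
  calc G (deltaComb (k + 1) v)
      = lotkaVolterraField (ellCoeffs p q r k) (deltaComb (k + 1) v) :=
        lotkaVolterraField_ellCoeffs p q r k _
    _ = deltaComb (k + 2) (reducedMatrix (ellCoeffs p q r k) k *ᵥ v) +
          h * (C (((p : ℂ) + q + r) / 3)⁻¹ * w) := by
        linear_combination hw_eq.symm - w * hh

/-- For `F₂ = (x(-qx+(q+r)y), y((p+r)x-py))` with `p,q,r` positive and any
`k ∈ ℕ`, the operator `ℓ_{k+3}^c : ⟨x^{k+2}, x^{k+1}y, y^{k+2}⟩ →
⟨x^{k+3}, x^{k+2}y, y^{k+3}⟩`, obtained from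
`g ↦ (F₂ − (3/(k+3))μD)(g)` by projecting modulo `h·𝒫_k`
(`h = ((p+q+r)/3) xy(x−y)`, `μ = (1/3)((−2q+p+r)x + (q+r−2p)y)`), is
represented by a matrix `M` of determinant
`((k+2)³/(k+3)³)(q+qk+p+r)(q+p+rk+r)(p+pk+q+r) ≠ 0`; hence it is bijective. -/
theorem stmt8 (p q r k : ℕ) (hp : 1 ≤ p) (hq : 1 ≤ q) (hr : 1 ≤ r) :
    let x : MvPolynomial (Fin 2) ℂ := X 0
    let y : MvPolynomial (Fin 2) ℂ := X 1
    let P : MvPolynomial (Fin 2) ℂ := x * (-(q : MvPolynomial (Fin 2) ℂ) * x + ((q : MvPolynomial (Fin 2) ℂ) + r) * y)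
    let Q : MvPolynomial (Fin 2) ℂ := y * (((p : MvPolynomial (Fin 2) ℂ) + r) * x - (p : MvPolynomial (Fin 2) ℂ) * y)
    let μ : MvPolynomial (Fin 2) ℂ := C ((1 : ℂ) / 3) * ((C ((-2 : ℂ) * q + p + r)) * x + (C ((q : ℂ) + r - 2 * p)) * y)
    let h : MvPolynomial (Fin 2) ℂ := C (((p : ℂ) + q + r) / 3) * (x * y * (x - y))
    let G : MvPolynomial (Fin 2) ℂ → MvPolynomial (Fin 2) ℂ := fun g =>
      P * pderiv 0 g + Q * pderiv 1 g -
        C (3 / ((k : ℂ) + 3)) * μ * (x * pderiv 0 g + y * pderiv 1 g)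
    ∃ M : Matrix (Fin 3) (Fin 3) ℂ,
      (∀ v : Fin 3 → ℂ, ∃ w : MvPolynomial (Fin 2) ℂ, w.IsHomogeneous k ∧
        G (C (v 0) * x ^ (k + 2) + C (v 1) * x ^ (k + 1) * y + C (v 2) * y ^ (k + 2)) =
          C (M.mulVec v 0) * x ^ (k + 3) + C (M.mulVec v 1) * x ^ (k + 2) * y +
            C (M.mulVec v 2) * y ^ (k + 3) + h * w) ∧
      M.det = (((k : ℂ) + 2) ^ 3 / ((k : ℂ) + 3) ^ 3) *
        ((q : ℂ) + q * k + p + r) * ((q : ℂ) + p + r * k + r) * ((p : ℂ) + p * k + q + r) ∧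
      M.det ≠ 0 :=
  stmt8_general p q r k hq
end

section
/- The irreducibility hypothesis in the previous divisibility lemma cannot be weakened to non-irreducible invariant curves: for F₂ = (−2x², −3x² − 2xy + 3y²) and the invariant curve (y−x)², the polynomial p₃ = x²(y−x) satisfies F₂(p₃) = 3x²(y−x)² ∈ ⟨(y−x)²⟩, yet p₃ ∉ ⟨(y−x)²⟩. -/
/-!
Along `F₂`, both `(y - x)²` and `x²(y - x)` are transformed through `Q - P`, which factors as
`(y - x)(3y + x)`. Cancelling one factor `y - x`, the divisibility would give `y - x ∣ x²`,
which fails on the line `y = x`.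
-/

open MvPolynomial

section

variable {σ R : Type*} [CommRing R] {i j : σ}

theorem mul_pderiv_add_mul_pderiv_X_sub_X_sq (hij : i ≠ j) (P Q : MvPolynomial σ R) :
    P * pderiv i ((X j - X i) ^ 2) + Q * pderiv j ((X j - X i) ^ 2) =
      2 * (X j - X i) * (Q - P) := by
  simp only [map_sub, pderiv_pow, pderiv_X_self, pderiv_X_of_ne hij, pderiv_X_of_ne hij.symm]
  ring

theorem mul_pderiv_add_mul_pderiv_X_sq_mul_X_sub_X (hij : i ≠ j) (P Q : MvPolynomial σ R) :
    P * pderiv i (X i ^ 2 * (X j - X i)) + Q * pderiv j (X i ^ 2 * (X j - X i)) =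
      2 * X i * (X j - X i) * P + X i ^ 2 * (Q - P) := by
  simp only [map_sub, pderiv_mul, pderiv_pow, pderiv_X_self, pderiv_X_of_ne hij,
    pderiv_X_of_ne hij.symm]
  ring

theorem not_X_sub_X_sq_dvd_X_sq_mul_X_sub_X [IsDomain R] (hij : i ≠ j) :
    ¬ (X j - X i) ^ 2 ∣ (X i ^ 2 * (X j - X i) : MvPolynomial σ R) := by
  have hne : (X j - X i : MvPolynomial σ R) ≠ 0 := sub_ne_zero.mpr (X_injective.ne hij.symm)
  rw [sq, mul_dvd_mul_iff_right hne]
  intro hdvd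
  -- At the point where every coordinate is 1, `X j - X i` vanishes but `X i ^ 2` does not.
  have := map_dvd (eval fun _ => (1 : R)) hdvd
  simp at this

end

/-- Counterexample showing the irreducibility hypothesis cannot be dropped:
for `F₂ = (−2x², −3x²−2xy+3y²)`, the curve `(y−x)²` is invariant,
`F₂(x²(y−x)) = 3x²(y−x)² ∈ ⟨(y−x)²⟩`, and yet `(y−x)² ∤ x²(y−x)`. -/
theorem stmt10 :
    let x : MvPolynomial (Fin 2) ℂ := X 0
    let y : MvPolynomial (Fin 2) ℂ := X 1
    let P : MvPolynomial (Fin 2) ℂ := -2 * x ^ 2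
    let Q : MvPolynomial (Fin 2) ℂ := -3 * x ^ 2 - 2 * x * y + 3 * y ^ 2
    (∃ K : MvPolynomial (Fin 2) ℂ,
        P * pderiv 0 ((y - x) ^ 2) + Q * pderiv 1 ((y - x) ^ 2) = K * (y - x) ^ 2) ∧
    P * pderiv 0 (x ^ 2 * (y - x)) + Q * pderiv 1 (x ^ 2 * (y - x)) = 3 * x ^ 2 * (y - x) ^ 2 ∧
    ¬ (y - x) ^ 2 ∣ x ^ 2 * (y - x) := by
  intro x y P Q
  have h01 : (0 : Fin 2) ≠ 1 := by decide
  have hQP : Q - P = (y - x) * (3 * y + x) := by ring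
  refine ⟨⟨2 * (3 * y + x), ?_⟩, ?_, not_X_sub_X_sq_dvd_X_sq_mul_X_sub_X h01⟩
  · rw [mul_pderiv_add_mul_pderiv_X_sub_X_sq h01, hQP]
    ring
  · rw [mul_pderiv_add_mul_pderiv_X_sq_mul_X_sub_X h01, hQP]
    ring
end

section
/- For system (1) of Theorem 5, with b = b_{02} and a₂₀ = b, a₁₁ = −3b, a₀₂ = 0, b₂₀ = −2b, b₁₁ = −5b, b₀₂ = b, the function I(x,y) = x y (x − y − b x² + (1/3) b x y)² (1 − b x − b y)^{−3} is a first integral of the vector field F = (x(3y − x + b x² − 3b x y), y(3x − y − 2b x² − 5b x y + b y²)), i.e. F(I) = 0 wherever 1 − b x − b y ≠ 0. -/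
/-- Case (1) of Theorem 5 (with `b = b₀₂`; `a₂₀ = b`, `a₁₁ = −3b`, `a₀₂ = 0`,
`b₂₀ = −2b`, `b₁₁ = −5b`, `b₀₂ = b`): the function
`I = xy(x − y − bx² + (1/3)bxy)²(1 − bx − by)⁻³` is a first integral of
`F = (x(3y − x + bx² − 3bxy), y(3x − y − 2bx² − 5bxy + by²))` wherever
`1 − bx − by ≠ 0`. -/
theorem stmt14 (b : ℝ) (x y : ℝ) (hden : 1 - b * x - b * y ≠ 0) :
    (x * (3 * y - x + b * x ^ 2 - 3 * b * x * y)) *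
        deriv (fun t : ℝ =>
          t * y * (t - y - b * t ^ 2 + (1 / 3) * b * t * y) ^ 2 / (1 - b * t - b * y) ^ 3) x +
    (y * (3 * x - y - 2 * b * x ^ 2 - 5 * b * x * y + b * y ^ 2)) *
        deriv (fun t : ℝ =>
          x * t * (x - t - b * x ^ 2 + (1 / 3) * b * x * t) ^ 2 / (1 - b * x - b * t) ^ 3) y = 0 := by
  have hd3 : (1 - b * x - b * y) ^ 3 ≠ 0 := pow_ne_zero _ hden
  have hN1 : HasDerivAt (fun t : ℝ => t * y * (t - y - b * t ^ 2 + (1 / 3) * b * t * y) ^ 2)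
      (y * (x - y - b * x ^ 2 + (1 / 3) * b * x * y) ^ 2 +
        x * y * (2 * (x - y - b * x ^ 2 + (1 / 3) * b * x * y) *
          (1 - 2 * b * x + (1 / 3) * b * y))) x := by
    have h1 : HasDerivAt (fun t : ℝ => t * y) y x := by
      simpa using (hasDerivAt_id x).mul_const y
    have h2 : HasDerivAt (fun t : ℝ => t - y - b * t ^ 2 + (1 / 3) * b * t * y)
        (1 - 2 * b * x + (1 / 3) * b * y) x := by
      have : HasDerivAt (fun t : ℝ => t - y - b * t ^ 2 + (1 / 3) * b * t * y)
          (1 - b * (2 * x ^ 1) + (1 / 3) * b * y) x := by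
        exact (((hasDerivAt_id x).sub_const y).sub
            ((hasDerivAt_pow 2 x).const_mul b)).add
          (by simpa [mul_assoc] using ((hasDerivAt_id x).const_mul ((1 / 3) * b)).mul_const y)
      convert this using 1 <;> ring
    simpa using h1.fun_mul (h2.fun_pow 2)
  have hD1 : HasDerivAt (fun t : ℝ => (1 - b * t - b * y) ^ 3)
      (3 * (1 - b * x - b * y) ^ 2 * (-b)) x := by
    have h : HasDerivAt (fun t : ℝ => 1 - b * t - b * y) (-b) x := by
      simpa using (((hasDerivAt_id x).const_mul b).const_sub 1).sub_const (b * y)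
    simpa [mul_comm] using (h.fun_pow 3)
  have hN2 : HasDerivAt (fun t : ℝ => x * t * (x - t - b * x ^ 2 + (1 / 3) * b * x * t) ^ 2)
      (x * (x - y - b * x ^ 2 + (1 / 3) * b * x * y) ^ 2 +
        x * y * (2 * (x - y - b * x ^ 2 + (1 / 3) * b * x * y) *
          (-1 + (1 / 3) * b * x))) y := by
    have h1 : HasDerivAt (fun t : ℝ => x * t) x y := by
      simpa using (hasDerivAt_id y).const_mul x
    have h2 : HasDerivAt (fun t : ℝ => x - t - b * x ^ 2 + (1 / 3) * b * x * t)
        (-1 + (1 / 3) * b * x) y := by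
      have : HasDerivAt (fun t : ℝ => x - t - b * x ^ 2 + (1 / 3) * b * x * t)
          (-1 + (1 / 3) * b * x * 1) y := by
        exact (((hasDerivAt_id y).const_sub x).sub_const (b * x ^ 2)).add
          ((hasDerivAt_id y).const_mul ((1 / 3) * b * x))
      convert this using 1 <;> ring
    simpa using h1.fun_mul (h2.fun_pow 2)
  have hD2 : HasDerivAt (fun t : ℝ => (1 - b * x - b * t) ^ 3)
      (3 * (1 - b * x - b * y) ^ 2 * (-b)) y := by
    have h : HasDerivAt (fun t : ℝ => 1 - b * x - b * t) (-b) y := by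
      simpa using (((hasDerivAt_id y).const_mul b).const_sub (1 - b * x))
    simpa [mul_comm] using (h.fun_pow 3)
  rw [(hN1.fun_div hD1 hd3).deriv, (hN2.fun_div hD2 hd3).deriv]
  field_simp
  ring
end

section
/- For system (4) of Theorem 5: with a₀₂ = −5b₀₂, a₁₁ = −b₁₁, a₂₀ = −b₂₀/5, the polynomial I(x,y) = x y (3x − 3y − 3a₂₀x² + b₁₁xy + 3b₀₂y²)² is a first integral of the vector field F = (x(3y − x + a₂₀x² + a₁₁xy + a₀₂y²), y(3x − y + b₂₀x² + b₁₁xy + b₀₂y²)): F(I) = 0 identically. -/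
/-!
The lines `x = 0`, `y = 0` and the conic `L = 0`, where
`L = 3x − 3y − 3a₂₀x² + b₁₁xy + 3b₀₂y²`, are invariant curves of the vector field, with cofactors
`Kₓ = P/x`, `K_y = Q/y` and `K_L = 2a₂₀x² + 2b₀₂y² − x − y`. Under the relations of case (4),
`Kₓ + K_y + 2K_L = 0`, so the Darboux product `x y L²` is annihilated by the field.
-/

open MvPolynomial

namespace Derivation

variable {R A : Type*} [CommSemiring R] [CommSemiring A] [Algebra R A] (D : Derivation R A A)
  {f g k l : A}

theorem map_mul_of_cofactor (hf : D f = f * k) (hg : D g = g * l) :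
    D (f * g) = f * g * (k + l) := by
  rw [leibniz, hf, hg, smul_eq_mul, smul_eq_mul]
  ring

theorem map_pow_of_cofactor (hf : D f = f * k) (n : ℕ) : D (f ^ n) = f ^ n * (n * k) := by
  induction n with
  | zero => simp
  | succ n ih =>
    rw [pow_succ, D.map_mul_of_cofactor ih hf]
    push_cast
    ring

end Derivation

section Case4

variable {R A : Type*} [CommRing R] [CommRing A] [Algebra R A]

def case4Conic (a20 b11 b02 : R) (x y : A) : A :=
  3 * x - 3 * y - 3 * algebraMap R A a20 * x ^ 2 + algebraMap R A b11 * x * y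
    + 3 * algebraMap R A b02 * y ^ 2

variable (D : Derivation R A A) {x y : A} {a20 a11 a02 b20 b11 b02 : R}

theorem map_case4Conic (h1 : a02 + 5 * b02 = 0) (h2 : a11 + b11 = 0) (h3 : 5 * a20 + b20 = 0)
    (hx : D x = x * (3 * y - x + algebraMap R A a20 * x ^ 2 + algebraMap R A a11 * x * y
      + algebraMap R A a02 * y ^ 2))
    (hy : D y = y * (3 * x - y + algebraMap R A b20 * x ^ 2 + algebraMap R A b11 * x * y
      + algebraMap R A b02 * y ^ 2)) :
    D (case4Conic a20 b11 b02 x y) = case4Conic a20 b11 b02 x y *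
      (2 * algebraMap R A a20 * x ^ 2 + 2 * algebraMap R A b02 * y ^ 2 - x - y) := by
  obtain rfl : a02 = -5 * b02 := by linear_combination h1
  obtain rfl : a11 = -b11 := by linear_combination h2
  obtain rfl : b20 = -5 * a20 := by linear_combination h3
  have hD3 : D 3 = 0 := by exact_mod_cast D.map_natCast 3
  simp only [case4Conic, map_add, map_sub, map_mul, map_neg, map_ofNat, Derivation.leibniz, Derivation.leibniz_pow,
    Derivation.map_algebraMap, hD3, hx, hy, smul_eq_mul, nsmul_eq_mul]
  ring

theorem map_mul_mul_case4Conic_sq (h1 : a02 + 5 * b02 = 0) (h2 : a11 + b11 = 0)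
    (h3 : 5 * a20 + b20 = 0)
    (hx : D x = x * (3 * y - x + algebraMap R A a20 * x ^ 2 + algebraMap R A a11 * x * y
      + algebraMap R A a02 * y ^ 2))
    (hy : D y = y * (3 * x - y + algebraMap R A b20 * x ^ 2 + algebraMap R A b11 * x * y
      + algebraMap R A b02 * y ^ 2)) :
    D (x * y * case4Conic a20 b11 b02 x y ^ 2) = 0 := by
  rw [D.map_mul_of_cofactor (D.map_mul_of_cofactor hx hy)
    (D.map_pow_of_cofactor (map_case4Conic D h1 h2 h3 hx hy) 2)]
  obtain rfl : a02 = -5 * b02 := by linear_combination h1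
  obtain rfl : a11 = -b11 := by linear_combination h2
  obtain rfl : b20 = -5 * a20 := by linear_combination h3
  simp only [map_neg, map_mul, map_ofNat]
  ring

end Case4

/-- Case (4) of Theorem 5: if `a₀₂ + 5b₀₂ = 0`, `a₁₁ + b₁₁ = 0` and
`5a₂₀ + b₂₀ = 0`, then `I = xy(3x − 3y − 3a₂₀x² + b₁₁xy + 3b₀₂y²)²` is a
polynomial first integral of
`F = (x(3y − x + a₂₀x² + a₁₁xy + a₀₂y²), y(3x − y + b₂₀x² + b₁₁xy + b₀₂y²))`. -/
theorem stmt15 (a20 a11 a02 b20 b11 b02 : ℝ)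
    (h1 : a02 + 5 * b02 = 0) (h2 : a11 + b11 = 0) (h3 : 5 * a20 + b20 = 0) :
    let x : MvPolynomial (Fin 2) ℝ := X 0
    let y : MvPolynomial (Fin 2) ℝ := X 1
    let P : MvPolynomial (Fin 2) ℝ :=
      x * (3 * y - x + C a20 * x ^ 2 + C a11 * x * y + C a02 * y ^ 2)
    let Q : MvPolynomial (Fin 2) ℝ :=
      y * (3 * x - y + C b20 * x ^ 2 + C b11 * x * y + C b02 * y ^ 2)
    let I : MvPolynomial (Fin 2) ℝ :=
      x * y * (3 * x - 3 * y - 3 * C a20 * x ^ 2 + C b11 * x * y + 3 * C b02 * y ^ 2) ^ 2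
    P * pderiv 0 I + Q * pderiv 1 I = 0 := by
  intro x y P Q I
  let D : Derivation ℝ (MvPolynomial (Fin 2) ℝ) (MvPolynomial (Fin 2) ℝ) :=
    P • pderiv 0 + Q • pderiv 1
  have hx : D x = P := by simp [D, x, pderiv_X]
  have hy : D y = Q := by simp [D, y, pderiv_X]
  exact map_mul_mul_case4Conic_sq D h1 h2 h3 hx hy
end

section
/- For system (6) of Theorem 5 with b₁₁ = −2b₀₂, write b = b₀₂ and take a₂₀ = −b, a₀₂ = −b, a₁₁ = 2b, b₂₀ = b, b₁₁ = −2b, b₀₂ = b; then the function V(x,y) = x y (x − y)(1 + b x − b y) is an inverse integrating factor of the vector field F = (P,Q) = (x(3y − x − b x² + 2b xy − b y²), y(3x − y + b x² − 2b xy + b y²)), i.e. P ∂V/∂x + Q ∂V/∂y = V·(∂P/∂x + ∂Q/∂y). -/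
open MvPolynomial

lemma pd_num (i : Fin 2) (n : ℕ) [n.AtLeastTwo] :
    (pderiv i) (OfNat.ofNat n : MvPolynomial (Fin 2) ℝ) = 0 := by
  rw [show (OfNat.ofNat n : MvPolynomial (Fin 2) ℝ) = C (OfNat.ofNat n) from
    (map_ofNat C n).symm, pderiv_C]

/-- Case (6) of Theorem 5 with `b₁₁ = −2b₀₂` (write `b = b₀₂`; then
`a₂₀ = −b`, `a₁₁ = 2b`, `a₀₂ = −b`, `b₂₀ = b`): the function
`V = xy(x−y)(1 + bx − by)` is an inverse integrating factor of
`F = (x(3y − x − bx² + 2bxy − by²), y(3x − y + bx² − 2bxy + by²))`, i.e.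
`P ∂V/∂x + Q ∂V/∂y = V(∂P/∂x + ∂Q/∂y)`. -/
theorem stmt16 (b : ℝ) :
    let x : MvPolynomial (Fin 2) ℝ := X 0
    let y : MvPolynomial (Fin 2) ℝ := X 1
    let P : MvPolynomial (Fin 2) ℝ :=
      x * (3 * y - x - C b * x ^ 2 + 2 * C b * x * y - C b * y ^ 2)
    let Q : MvPolynomial (Fin 2) ℝ :=
      y * (3 * x - y + C b * x ^ 2 - 2 * C b * x * y + C b * y ^ 2)
    let V : MvPolynomial (Fin 2) ℝ := x * y * (x - y) * (1 + C b * x - C b * y)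
    P * pderiv 0 V + Q * pderiv 1 V = V * (pderiv 0 P + pderiv 1 Q) := by
  simp only [show (3 : MvPolynomial (Fin 2) ℝ) = C 3 from (map_ofNat C 3).symm,
    show (2 : MvPolynomial (Fin 2) ℝ) = C 2 from (map_ofNat C 2).symm,
    map_add, map_sub, map_mul, map_one, pderiv_X, pderiv_C,
    Derivation.leibniz, Derivation.leibniz_pow, map_pow, smul_eq_mul]
  norm_num [Fin.ext_iff]
  simp only [map_ofNat]
  ring
end
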